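/- arXiv:1907.06895 — 6 statements merged into one kernel-verified Lean document; each statement's English description precedes it below -/
import Mathlib

section
/- Let p, q, r be continuous on [t₁, t₂) with p > 0, and let y be a C¹ solution of the Riccati equation y' + y²/p + (q/p)·y + r = 0 on [t₁, t₂). Then for all t ∈ [t₁, t₂), y(t) = y(t₁)·exp(−∫_{t₁}^t (y(τ)+q(τ))/p(τ) dτ) − ∫_{t₁}^t exp(−∫_τ^t (y(s)+q(s))/p(s) ds)·r(τ) dτ. -/
/-!
Along a solution, the Riccati equation is the linear equation `y' + a y + r = 0` with the
coefficient `a = (y + q) / p`. Multiplying by the integrating factor `exp (∫_{t₁}^t a)` makes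
`y · exp (∫_{t₁}^t a) + ∫_{t₁}^t exp (∫_{t₁}^τ a) r(τ) dτ` constant, and solving for `y(t)` gives
the variation-of-constants formula.
-/

open Set intervalIntegral

section Primitive

variable {f : ℝ → ℝ} {a b : ℝ}

theorem hasDerivAt_integral_of_continuousOn_Icc (hf : ContinuousOn f (Icc a b)) {x : ℝ}
    (hx : x ∈ Ioo a b) : HasDerivAt (fun u => ∫ s in a..u, f s) (f x) x :=
  integral_hasDerivAt_right
    ((hf.mono (uIcc_subset_Icc (left_mem_Icc.2 (hx.1.trans hx.2).le) (Ioo_subset_Icc_self hx)))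
      |>.intervalIntegrable)
    ((hf.mono Ioo_subset_Icc_self).stronglyMeasurableAtFilter isOpen_Ioo x hx)
    (hf.continuousAt (Icc_mem_nhds hx.1 hx.2))

theorem continuousOn_integral_of_continuousOn_Icc (hf : ContinuousOn f (Icc a b)) (hab : a ≤ b) :
    ContinuousOn (fun u => ∫ s in a..u, f s) (Icc a b) := by
  rw [← uIcc_of_le hab] at hf ⊢
  exact continuousOn_primitive_interval hf.integrableOn_uIcc

end Primitive

section LinearODE

variable {a r y y' : ℝ → ℝ} {t₁ t : ℝ}

theorem linear_ode_integrating_factor (hle : t₁ ≤ t) (ha : ContinuousOn a (Icc t₁ t))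
    (hr : ContinuousOn r (Icc t₁ t)) (hyc : ContinuousOn y (Icc t₁ t))
    (hy : ∀ x ∈ Ioo t₁ t, HasDerivAt y (y' x) x)
    (hode : ∀ x ∈ Ioo t₁ t, y' x + a x * y x + r x = 0) :
    y t * Real.exp (∫ s in t₁..t, a s)
      + ∫ τ in t₁..t, Real.exp (∫ s in t₁..τ, a s) * r τ = y t₁ := by
  set A : ℝ → ℝ := fun u => ∫ s in t₁..u, a s
  have hAc : ContinuousOn A (Icc t₁ t) := continuousOn_integral_of_continuousOn_Icc ha hle
  have hgc : ContinuousOn (fun τ => Real.exp (A τ) * r τ) (Icc t₁ t) := hAc.rexp.mul hr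
  set F : ℝ → ℝ := fun u => y u * Real.exp (A u) + ∫ τ in t₁..u, Real.exp (A τ) * r τ
  have hFc : ContinuousOn F (Icc t₁ t) :=
    (hyc.mul hAc.rexp).add (continuousOn_integral_of_continuousOn_Icc hgc hle)
  have hF_deriv : ∀ x ∈ Ioo t₁ t, HasDerivAt F 0 x := by
    intro x hx
    refine (((hy x hx).mul (hasDerivAt_integral_of_continuousOn_Icc ha hx).exp).add
      (hasDerivAt_integral_of_continuousOn_Icc hgc hx)).congr_deriv ?_
    linear_combination Real.exp (A x) * hode x hx
  have hF_const := integral_eq_sub_of_hasDerivAt_of_le hle hFc hF_deriv intervalIntegrable_const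
  simp only [integral_zero, integral_same, Real.exp_zero, mul_one, add_zero, F, A] at hF_const
  linarith

theorem linear_ode_variation_of_constants (hle : t₁ ≤ t) (ha : ContinuousOn a (Icc t₁ t))
    (hr : ContinuousOn r (Icc t₁ t)) (hyc : ContinuousOn y (Icc t₁ t))
    (hy : ∀ x ∈ Ioo t₁ t, HasDerivAt y (y' x) x)
    (hode : ∀ x ∈ Ioo t₁ t, y' x + a x * y x + r x = 0) :
    y t = y t₁ * Real.exp (-∫ s in t₁..t, a s)
      - ∫ τ in t₁..t, Real.exp (-∫ s in τ..t, a s) * r τ := by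
  have ha_int : ∀ u ∈ Icc t₁ t, IntervalIntegrable a MeasureTheory.volume t₁ u := fun u hu =>
    (ha.mono (uIcc_subset_Icc (left_mem_Icc.2 hle) hu)).intervalIntegrable
  have hfactor : (∫ τ in t₁..t, Real.exp (-∫ s in τ..t, a s) * r τ)
      = Real.exp (-∫ s in t₁..t, a s) * ∫ τ in t₁..t, Real.exp (∫ s in t₁..τ, a s) * r τ := by
    rw [← integral_const_mul]
    refine integral_congr fun τ hτ => ?_
    rw [uIcc_of_le hle] at hτ
    rw [← integral_interval_sub_left (ha_int t (right_mem_Icc.2 hle)) (ha_int τ hτ), neg_sub,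
      Real.exp_sub, Real.exp_neg]
    field_simp
  rw [hfactor, ← linear_ode_integrating_factor hle ha hr hyc hy hode, Real.exp_neg]
  field_simp
  ring

end LinearODE

theorem stmt_2_general (t₁ t₂ : ℝ) (p q r y y' : ℝ → ℝ)
    (hp : ContinuousOn p (Set.Ico t₁ t₂))
    (hq : ContinuousOn q (Set.Ico t₁ t₂))
    (hr : ContinuousOn r (Set.Ico t₁ t₂))
    (hppos : ∀ t ∈ Set.Ico t₁ t₂, 0 < p t)
    (hy : ∀ t ∈ Set.Ico t₁ t₂, HasDerivAt y (y' t) t)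
    (hode : ∀ t ∈ Set.Ico t₁ t₂,
      y' t + (y t) ^ 2 / p t + (q t / p t) * y t + r t = 0) :
    ∀ t ∈ Set.Ico t₁ t₂,
      y t = y t₁ * Real.exp (-∫ τ in t₁..t, (y τ + q τ) / p τ)
        - ∫ τ in t₁..t, Real.exp (-∫ s in τ..t, (y s + q s) / p s) * r τ := by
  intro t ⟨hle, ht⟩
  have hIcc : Icc t₁ t ⊆ Ico t₁ t₂ := Icc_subset_Ico_right ht
  have hIoo : Ioo t₁ t ⊆ Ico t₁ t₂ := Ioo_subset_Icc_self.trans hIcc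
  have hyc : ContinuousOn y (Ico t₁ t₂) := fun x hx => (hy x hx).continuousAt.continuousWithinAt
  have hac : ContinuousOn (fun s => (y s + q s) / p s) (Ico t₁ t₂) :=
    (hyc.add hq).div hp fun x hx => (hppos x hx).ne'
  refine linear_ode_variation_of_constants hle (hac.mono hIcc) (hr.mono hIcc) (hyc.mono hIcc)
    (fun x hx => hy x (hIoo hx)) fun x hx => ?_
  have hp0 : p x ≠ 0 := (hppos x (hIoo hx)).ne'
  rw [← hode x (hIoo hx)]
  field_simp
  ring

/-- Cauchy-formula representation of a solution of the Riccati equation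
`y' + y²/p + (q/p)y + r = 0`. -/
theorem stmt_2 (t₁ t₂ : ℝ) (ht : t₁ < t₂) (p q r y y' : ℝ → ℝ)
    (hp : ContinuousOn p (Set.Ico t₁ t₂))
    (hq : ContinuousOn q (Set.Ico t₁ t₂))
    (hr : ContinuousOn r (Set.Ico t₁ t₂))
    (hppos : ∀ t ∈ Set.Ico t₁ t₂, 0 < p t)
    (hy : ∀ t ∈ Set.Ico t₁ t₂, HasDerivAt y (y' t) t)
    (hy'c : ContinuousOn y' (Set.Ico t₁ t₂))
    (hode : ∀ t ∈ Set.Ico t₁ t₂,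
      y' t + (y t) ^ 2 / p t + (q t / p t) * y t + r t = 0) :
    ∀ t ∈ Set.Ico t₁ t₂,
      y t = y t₁ * Real.exp (-∫ τ in t₁..t, (y τ + q τ) / p τ)
        - ∫ τ in t₁..t, Real.exp (-∫ s in τ..t, (y s + q s) / p s) * r τ :=
  stmt_2_general t₁ t₂ p q r y y' hp hq hr hppos hy hode
end

section
/- Let p, q, r be continuous on [t₁, t₂) with p > 0, and let y be a C¹ solution of y' + y²/p + (q/p)y + r = 0 on [t₁, t₂). If y(t₁) ≥ 0 and r(t) ≤ 0 for all t ∈ [t₁, t₂), then y(t) ≥ 0 for all t ∈ [t₁, t₂). Moreover, if y(t₁) > 0 then y(t) > 0 on [t₁, t₂). -/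
open Set intervalIntegral MeasureTheory

/-- If `y` solves `y' + y²/p + (q/p)y + r = 0` with `y(t₁) ≥ 0` and `r ≤ 0`,
then `y ≥ 0` on `[t₁, t₂)`; moreover `y(t₁) > 0` gives `y > 0` there. -/
theorem stmt_3 (t₁ t₂ : ℝ) (ht : t₁ < t₂) (p q r y y' : ℝ → ℝ)
    (hp : ContinuousOn p (Set.Ico t₁ t₂))
    (hq : ContinuousOn q (Set.Ico t₁ t₂))
    (hr : ContinuousOn r (Set.Ico t₁ t₂))
    (hppos : ∀ t ∈ Set.Ico t₁ t₂, 0 < p t)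
    (hy : ∀ t ∈ Set.Ico t₁ t₂, HasDerivAt y (y' t) t)
    (hy'c : ContinuousOn y' (Set.Ico t₁ t₂))
    (hode : ∀ t ∈ Set.Ico t₁ t₂,
      y' t + (y t) ^ 2 / p t + (q t / p t) * y t + r t = 0)
    (hrneg : ∀ t ∈ Set.Ico t₁ t₂, r t ≤ 0)
    (hy0 : 0 ≤ y t₁) :
    (∀ t ∈ Set.Ico t₁ t₂, 0 ≤ y t) ∧
      (0 < y t₁ → ∀ t ∈ Set.Ico t₁ t₂, 0 < y t) := by
  have key : ∀ s ∈ Set.Ico t₁ t₂, ∃ c : ℝ, 0 < c ∧ c * y t₁ ≤ y s := by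
    intro s hs
    have hs1 : t₁ ≤ s := hs.1
    have hsub : Set.Icc t₁ s ⊆ Set.Ico t₁ t₂ := Set.Icc_subset_Ico_right hs.2
    have hycont : ContinuousOn y (Set.Ico t₁ t₂) := fun t htm =>
      (hy t htm).continuousAt.continuousWithinAt
    -- the coefficient function
    set a : ℝ → ℝ := fun t => (y t + q t) / p t with ha_def
    have hacont : ContinuousOn a (Set.Icc t₁ s) :=
      (((hycont.add hq).div hp (fun t htm => (hppos t htm).ne')).mono hsub)
    -- extend `a` continuously to all of ℝ
    set aE : ℝ → ℝ := fun t => a (Set.projIcc t₁ s hs1 t : ℝ) with haE_def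
    have haEcont : Continuous aE := by
      exact hacont.restrict.comp continuous_projIcc
    have haEeq : ∀ t ∈ Set.Icc t₁ s, aE t = a t := by
      intro t htm
      simp [haE_def, Set.projIcc_of_mem hs1 htm]
    -- antiderivative
    set A : ℝ → ℝ := fun t => ∫ x in t₁..t, aE x with hA_def
    have hA : ∀ t : ℝ, HasDerivAt A (aE t) t := fun t =>
      intervalIntegral.integral_hasDerivAt_right (haEcont.intervalIntegrable _ _)
        (haEcont.stronglyMeasurableAtFilter _ _) haEcont.continuousAt
    set g : ℝ → ℝ := fun t => Real.exp (A t) * y t with hg_def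
    have hg : ∀ t ∈ Set.Icc t₁ s, HasDerivAt g
        (Real.exp (A t) * aE t * y t + Real.exp (A t) * y' t) t := by
      intro t htm
      exact ((hA t).exp.mul (hy t (hsub htm)))
    have hg' : ∀ t ∈ Set.Icc t₁ s,
        0 ≤ Real.exp (A t) * aE t * y t + Real.exp (A t) * y' t := by
      intro t htm
      have htm' := hsub htm
      have hpt := hppos t htm'
      have hode' := hode t htm'
      have hrt := hrneg t htm'
      rw [haEeq t htm]
      have : a t * y t + y' t = -r t := by
        have h := hode'
        simp only [ha_def]
        field_simp at h ⊢
        nlinarith [h]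
      have h2 : Real.exp (A t) * a t * y t + Real.exp (A t) * y' t
          = Real.exp (A t) * (-r t) := by rw [← this]; ring
      rw [h2]
      have := Real.exp_pos (A t)
      nlinarith
    have hmono : MonotoneOn g (Set.Icc t₁ s) := by
      apply monotoneOn_of_hasDerivWithinAt_nonneg (convex_Icc t₁ s)
        (fun t htm => (hg t htm).continuousAt.continuousWithinAt)
        (f' := fun t => Real.exp (A t) * aE t * y t + Real.exp (A t) * y' t)
      · intro t htm
        exact ((hg t (interior_subset htm)).hasDerivWithinAt)
      · intro t htm
        exact hg' t (interior_subset htm)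
    have hAt₁ : A t₁ = 0 := by simp [hA_def]
    have h0 : y t₁ ≤ Real.exp (A s) * y s := by
      have := hmono (Set.left_mem_Icc.2 hs1) (Set.right_mem_Icc.2 hs1) hs1
      simpa [hg_def, hAt₁] using this
    refine ⟨Real.exp (-(A s)), Real.exp_pos _, ?_⟩
    have hE := Real.exp_pos (A s)
    have := mul_le_mul_of_nonneg_left h0 (Real.exp_pos (-(A s))).le
    calc Real.exp (-(A s)) * y t₁ ≤ Real.exp (-(A s)) * (Real.exp (A s) * y s) := this
      _ = y s := by rw [← mul_assoc, ← Real.exp_add]; simp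
  constructor
  · intro t htm
    obtain ⟨c, hc, hcy⟩ := key t htm
    nlinarith
  · intro hpos t htm
    obtain ⟨c, hc, hcy⟩ := key t htm
    nlinarith
end

section
/- Let p, q, r be continuous on [t₁, t₂] (t₂ finite) with p > 0, and let φ be a solution of (pφ')' + qφ' + rφ = 0 on [t₁, t₂) with φ(t₁) ≠ 0 and such that y(t) = p(t)φ'(t)/φ(t) ≥ 0 on [t₁, t₂) and ∫_{t₁}^{t₂} y(τ)/p(τ) dτ < ∞. Then φ has a finite nonzero limit as t → t₂⁻ and φ' has a finite limit as t → t₂⁻, so φ extends as a solution beyond t₂. -/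
/-!
Since `φ ≠ 0` keeps its sign, `log (φ / φ t₁)` has the integrable derivative `φ'/φ = y/p`, so it
has a finite limit at `t₂` and `φ` tends to a nonzero limit; in particular `φ` is bounded, so
`φ' = φ · (φ'/φ)` is integrable. Then `(pφ')' = -qφ' - rφ` is integrable, `pφ'` has a limit at
`t₂`, and so does `φ' = pφ'/p` because `p t₂ > 0`.
-/

open Set MeasureTheory Filter Topology

section LeftLimits

variable {E : Type*} [NormedAddCommGroup E] [NormedSpace ℝ E] {a b : ℝ}

theorem tendsto_intervalIntegral_nhdsLT_of_integrableOn_Ico {f : ℝ → E} (hab : a < b)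
    (hf : IntegrableOn f (Ico a b)) :
    Tendsto (fun t => ∫ s in a..t, f s) (𝓝[<] b) (𝓝 (∫ s in Ico a b, f s)) := by
  have hf_Icc : IntegrableOn f (uIcc a b) := by
    rwa [uIcc_of_le hab.le, integrableOn_Icc_iff_integrableOn_Ico]
  have hcont := intervalIntegral.continuousOn_primitive_interval hf_Icc
  rw [uIcc_of_le hab.le] at hcont
  have hval : ∫ s in a..b, f s = ∫ s in Ico a b, f s := by
    rw [intervalIntegral.integral_of_le hab.le, integral_Ioc_eq_integral_Ioo,
      integral_Ico_eq_integral_Ioo]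
  rw [← hval, ← nhdsWithin_Ico_eq_nhdsLT hab]
  exact (hcont b (right_mem_Icc.2 hab.le)).tendsto.mono_left
    (nhdsWithin_mono b Ico_subset_Icc_self)

variable [CompleteSpace E]

theorem tendsto_nhdsLT_of_hasDerivAt_of_integrableOn {G g : ℝ → E} (hab : a < b)
    (hG : ∀ x ∈ Ico a b, HasDerivAt G (g x) x) (hg : IntegrableOn g (Ico a b)) :
    Tendsto G (𝓝[<] b) (𝓝 (G a + ∫ s in Ico a b, g s)) := by
  have hftc : ∀ x ∈ Ico a b, G a + ∫ s in a..x, g s = G x := by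
    intro x hx
    have hsub : Icc a x ⊆ Ico a b := Icc_subset_Ico_right hx.2
    rw [intervalIntegral.integral_eq_sub_of_hasDerivAt, add_sub_cancel]
    · rw [uIcc_of_le hx.1]
      exact fun y hy => hG y (hsub hy)
    · exact (intervalIntegrable_iff_integrableOn_Icc_of_le hx.1).2 (hg.mono_set hsub)
  exact ((tendsto_intervalIntegral_nhdsLT_of_integrableOn_Ico hab hg).const_add (G a)).congr'
    (eventuallyEq_of_mem (Ico_mem_nhdsLT hab) hftc)

end LeftLimits

theorem ContinuousOn.exists_bound_Ico_of_tendsto {E : Type*} [NormedAddCommGroup E]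
    {f : ℝ → E} {a b : ℝ} {l : E} (hf : ContinuousOn f (Ico a b))
    (hlim : Tendsto f (𝓝[<] b) (𝓝 l)) : ∃ C, ∀ x ∈ Ico a b, ‖f x‖ ≤ C := by
  obtain ⟨c, hcb, hnear⟩ := mem_nhdsLT_iff_exists_Ioo_subset.1
    (hlim.norm.eventually (eventually_le_nhds (lt_add_one ‖l‖)))
  obtain ⟨C, hC⟩ := isCompact_Icc.exists_bound_of_continuousOn
    (hf.mono (Icc_subset_Ico_right hcb))
  refine ⟨max C (‖l‖ + 1), fun x hx => ?_⟩
  rcases le_or_gt x c with hxc | hcx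
  · exact (hC x ⟨hx.1, hxc⟩).trans (le_max_left _ _)
  · exact (hnear ⟨hcx, hx.2⟩).trans (le_max_right _ _)

theorem ContinuousOn.integrableOn_Ico_of_tendsto {E : Type*} [NormedAddCommGroup E]
    {f : ℝ → E} {a b : ℝ} {l : E} (hf : ContinuousOn f (Ico a b))
    (hlim : Tendsto f (𝓝[<] b) (𝓝 l)) : IntegrableOn f (Ico a b) := by
  obtain ⟨C, hC⟩ := hf.exists_bound_Ico_of_tendsto hlim
  exact .of_bound measure_Ico_lt_top (hf.aestronglyMeasurable measurableSet_Ico) C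
    ((ae_restrict_iff' measurableSet_Ico).2 (.of_forall hC))

theorem ContinuousOn.integrableOn_mul_Ico_of_tendsto {f g : ℝ → ℝ} {a b l : ℝ}
    (hf : ContinuousOn f (Ico a b)) (hlim : Tendsto f (𝓝[<] b) (𝓝 l))
    (hg : IntegrableOn g (Ico a b)) : IntegrableOn (fun x => f x * g x) (Ico a b) := by
  obtain ⟨C, hC⟩ := hf.exists_bound_Ico_of_tendsto hlim
  exact hg.bdd_mul (hf.aestronglyMeasurable measurableSet_Ico)
    ((ae_restrict_iff' measurableSet_Ico).2 (.of_forall hC))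

theorem IsPreconnected.div_pos_of_ne_zero {s : Set ℝ} (hs : IsPreconnected s) {f : ℝ → ℝ}
    (hf : ContinuousOn f s) (hf0 : ∀ x ∈ s, f x ≠ 0) {x y : ℝ} (hx : x ∈ s) (hy : y ∈ s) :
    0 < f y / f x := by
  by_contra hneg
  have h0 : (0 : ℝ) ∈ uIcc (f x) (f y) := by
    rcases div_nonpos_iff.1 (not_lt.1 hneg) with h | h
    · exact mem_uIcc.2 (Or.inl ⟨h.2, h.1⟩)
    · exact mem_uIcc.2 (Or.inr ⟨h.1, h.2⟩)
  obtain ⟨z, hz, hz0⟩ := (hs.image f hf).ordConnected.uIcc_subset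
    (mem_image_of_mem f hx) (mem_image_of_mem f hy) h0
  exact hf0 z hz hz0

theorem tendsto_nhdsLT_of_integrableOn_logDeriv {φ φ' : ℝ → ℝ} {a b : ℝ} (hab : a < b)
    (hφ : ∀ x ∈ Ico a b, HasDerivAt φ (φ' x) x) (hφ0 : ∀ x ∈ Ico a b, φ x ≠ 0)
    (hint : IntegrableOn (fun x => φ' x / φ x) (Ico a b)) :
    Tendsto φ (𝓝[<] b) (𝓝 (φ a * Real.exp (∫ x in Ico a b, φ' x / φ x))) := by
  have ha : a ∈ Ico a b := left_mem_Ico.2 hab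
  have hφa : φ a ≠ 0 := hφ0 a ha
  have hpos : ∀ x ∈ Ico a b, 0 < φ x / φ a := fun x hx =>
    isPreconnected_Ico.div_pos_of_ne_zero
      (fun y hy => (hφ y hy).continuousAt.continuousWithinAt) hφ0 ha hx
  have hlog : ∀ x ∈ Ico a b,
      HasDerivAt (fun t => Real.log (φ t / φ a)) (φ' x / φ x) x := by
    intro x hx
    convert ((hφ x hx).div_const (φ a)).log (hpos x hx).ne' using 1
    field_simp
  have hlim := (Real.continuous_exp.tendsto _).comp
    (tendsto_nhdsLT_of_hasDerivAt_of_integrableOn hab hlog hint)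
  rw [div_self hφa, Real.log_one, zero_add] at hlim
  refine (hlim.const_mul (φ a)).congr' (eventuallyEq_of_mem (Ico_mem_nhdsLT hab) fun x hx => ?_)
  simp only [Function.comp_apply, Real.exp_log (hpos x hx)]
  field_simp

theorem stmt_4_general (t₁ t₂ : ℝ) (ht : t₁ < t₂) (p q r φ φ' pφ'' : ℝ → ℝ)
    (hp : ContinuousOn p (Set.Icc t₁ t₂))
    (hq : ContinuousOn q (Set.Icc t₁ t₂))
    (hr : ContinuousOn r (Set.Icc t₁ t₂))
    (hppos : ∀ t ∈ Set.Icc t₁ t₂, 0 < p t)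
    (hφ : ∀ t ∈ Set.Ico t₁ t₂, HasDerivAt φ (φ' t) t)
    (hpφ : ∀ t ∈ Set.Ico t₁ t₂, HasDerivAt (fun s => p s * φ' s) (pφ'' t) t)
    (hode : ∀ t ∈ Set.Ico t₁ t₂, pφ'' t + q t * φ' t + r t * φ t = 0)
    (hφ1 : φ t₁ ≠ 0)
    (hφne : ∀ t ∈ Set.Ico t₁ t₂, φ t ≠ 0)
    (hint : MeasureTheory.IntegrableOn (fun τ => (p τ * φ' τ / φ τ) / p τ)
      (Set.Ico t₁ t₂)) :
    (∃ L : ℝ, L ≠ 0 ∧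
        Filter.Tendsto φ (nhdsWithin t₂ (Set.Iio t₂)) (nhds L)) ∧
      (∃ L' : ℝ, Filter.Tendsto φ' (nhdsWithin t₂ (Set.Iio t₂)) (nhds L')) := by
  have hp0 : ∀ t ∈ Icc t₁ t₂, p t ≠ 0 := fun t ht => (hppos t ht).ne'
  have hlogint : IntegrableOn (fun t => φ' t / φ t) (Ico t₁ t₂) :=
    hint.congr_fun (fun t ht => by
      simp only [mul_div_assoc, mul_div_cancel_left₀ _ (hp0 t (Ico_subset_Icc_self ht))])
      measurableSet_Ico
  have hφlim := tendsto_nhdsLT_of_integrableOn_logDeriv ht hφ hφne hlogint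
  have hφc : ContinuousOn φ (Ico t₁ t₂) := fun t ht => (hφ t ht).continuousAt.continuousWithinAt
  have hφint : IntegrableOn φ (Ico t₁ t₂) := hφc.integrableOn_Ico_of_tendsto hφlim
  have hφ'int : IntegrableOn φ' (Ico t₁ t₂) :=
    IntegrableOn.congr_fun (hφc.integrableOn_mul_Ico_of_tendsto hφlim hlogint)
      (fun t ht => mul_div_cancel₀ _ (hφne t ht)) measurableSet_Ico
  have hpφ''int : IntegrableOn pφ'' (Ico t₁ t₂) :=
    IntegrableOn.congr_fun
      ((hφ'int.continuousOn_mul_of_subset hq isCompact_Icc measurableSet_Ico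
        Ico_subset_Icc_self).add
      (hφint.continuousOn_mul_of_subset hr isCompact_Icc measurableSet_Ico
        Ico_subset_Icc_self)).neg
      (fun t ht => by simp only [Pi.neg_apply, Pi.add_apply]; linarith [hode t ht])
      measurableSet_Ico
  have hpφ'lim := tendsto_nhdsLT_of_hasDerivAt_of_integrableOn ht hpφ hpφ''int
  have hplim : Tendsto p (𝓝[<] t₂) (𝓝 (p t₂)) := by
    simpa only [nhdsWithin_Ico_eq_nhdsLT ht] using
      ((hp t₂ (right_mem_Icc.2 ht.le)).mono Ico_subset_Icc_self).tendsto
  have hφ'lim := (hpφ'lim.div hplim (hp0 t₂ (right_mem_Icc.2 ht.le))).congr'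
    (eventuallyEq_of_mem (Ico_mem_nhdsLT ht) fun t ht =>
      mul_div_cancel_left₀ (φ' t) (hp0 t (Ico_subset_Icc_self ht)))
  exact ⟨⟨_, mul_ne_zero hφ1 (Real.exp_ne_zero _), hφlim⟩, _, hφ'lim⟩

/-- If `φ` solves `(pφ')' + qφ' + rφ = 0` on `[t₁, t₂)` with `φ(t₁) ≠ 0`,
`y = pφ'/φ ≥ 0` and `∫_{t₁}^{t₂} y/p < ∞`, then `φ` has a finite nonzero
left limit at `t₂` and `φ'` has a finite left limit at `t₂`. -/
theorem stmt_4 (t₁ t₂ : ℝ) (ht : t₁ < t₂) (p q r φ φ' pφ'' : ℝ → ℝ)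
    (hp : ContinuousOn p (Set.Icc t₁ t₂))
    (hq : ContinuousOn q (Set.Icc t₁ t₂))
    (hr : ContinuousOn r (Set.Icc t₁ t₂))
    (hppos : ∀ t ∈ Set.Icc t₁ t₂, 0 < p t)
    (hφ : ∀ t ∈ Set.Ico t₁ t₂, HasDerivAt φ (φ' t) t)
    (hφ'c : ContinuousOn φ' (Set.Ico t₁ t₂))
    (hpφ : ∀ t ∈ Set.Ico t₁ t₂, HasDerivAt (fun s => p s * φ' s) (pφ'' t) t)
    (hode : ∀ t ∈ Set.Ico t₁ t₂, pφ'' t + q t * φ' t + r t * φ t = 0)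
    (hφ1 : φ t₁ ≠ 0)
    (hφne : ∀ t ∈ Set.Ico t₁ t₂, φ t ≠ 0)
    (hynn : ∀ t ∈ Set.Ico t₁ t₂, 0 ≤ p t * φ' t / φ t)
    (hint : MeasureTheory.IntegrableOn (fun τ => (p τ * φ' τ / φ τ) / p τ)
      (Set.Ico t₁ t₂)) :
    (∃ L : ℝ, L ≠ 0 ∧
        Filter.Tendsto φ (nhdsWithin t₂ (Set.Iio t₂)) (nhds L)) ∧
      (∃ L' : ℝ, Filter.Tendsto φ' (nhdsWithin t₂ (Set.Iio t₂)) (nhds L')) :=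
  stmt_4_general t₁ t₂ ht p q r φ φ' pφ'' hp hq hr hppos hφ hpφ hode hφ1 hφne hint
end

section
/- Let p₀, q₀, r₀ and p₁, q₁, r₁ be continuous with p₀, p₁ > 0. Suppose y₀ and y₁ are C¹ solutions on [t₁, t₂) of the Riccati equations y_j' + y_j²/p_j + (q_j/p_j)y_j + r_j = 0 (j = 0, 1). Then for j ∈ {0,1} and each t ∈ [t₁, t₂): y₁(t) − y₀(t) = (y₁(t₁) − y₀(t₁))·exp(−∫_{t₁}^t (y₀+y₁+q_{1−j})/p_{1−j} dτ) − ∫_{t₁}^t exp(−∫_τ^t (y₀+y₁+q_{1−j})/p_{1−j} ds)·[(1/p₁ − 1/p₀)·y_j² + (q₁/p₁ − q₀/p₀)·y_j + r₁ − r₀](τ) dτ. -/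
/-!
Subtracting the two Riccati equations and factoring `y₁² - y₀² = (y₀ + y₁)(y₁ - y₀)`, with the
coefficients of equation `k = 1 - j` pulled out, shows that `w = y₁ - y₀` solves the linear equation
`w' = -((y₀ + y₁ + q_k) / p_k) w - g_j`, where `g_j` is the discrepancy of the coefficients
evaluated at `y_j`. The formula is variation of constants for this equation: if `A' = a`, then
`(w e^A)' = -g e^A`.
-/

open MeasureTheory Set intervalIntegral Real

section LinearODE

variable {a g w : ℝ → ℝ} {t₁ t₂ : ℝ}

theorem hasDerivAt_primitive_of_continuousOn_Ico (ha : ContinuousOn a (Ico t₁ t₂)) {x : ℝ}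
    (hx : x ∈ Ioo t₁ t₂) : HasDerivAt (fun s => ∫ τ in t₁..s, a τ) (a x) x := by
  have hnhds : Ico t₁ t₂ ∈ nhds x :=
    Filter.mem_of_superset (isOpen_Ioo.mem_nhds hx) Ioo_subset_Ico_self
  refine integral_hasDerivAt_right ?_
    (ha.stronglyMeasurableAtFilter_nhdsWithin measurableSet_Ico x
      |>.filter_mono (by rw [nhdsWithin_eq_nhds.2 hnhds]))
    ((ha x (Ioo_subset_Ico_self hx)).continuousAt hnhds)
  exact (ha.mono (uIcc_subset_Icc (left_mem_Icc.2 hx.1.le) ⟨hx.1.le, le_rfl⟩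
    |>.trans (Icc_subset_Ico_right hx.2))).intervalIntegrable

theorem eq_variation_of_constants (ha : ContinuousOn a (Ico t₁ t₂))
    (hg : ContinuousOn g (Ico t₁ t₂))
    (hw : ∀ x ∈ Ico t₁ t₂, HasDerivAt w (-(a x * w x) - g x) x) {t : ℝ} (ht : t ∈ Ico t₁ t₂) :
    w t = w t₁ * exp (-∫ τ in t₁..t, a τ) - ∫ τ in t₁..t, exp (-∫ s in τ..t, a s) * g τ := by
  obtain ⟨ht₁, ht₂⟩ := ht
  have hsub : Icc t₁ t ⊆ Ico t₁ t₂ := Icc_subset_Ico_right ht₂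
  have ha_int : ∀ u ∈ Icc t₁ t, ∀ v ∈ Icc t₁ t, IntervalIntegrable a volume u v :=
    fun u hu v hv => (ha.mono ((uIcc_subset_Icc hu hv).trans hsub)).intervalIntegrable
  set A : ℝ → ℝ := fun s => ∫ τ in t₁..s, a τ
  have hA_cont : ContinuousOn A (Icc t₁ t) := by
    simpa only [uIcc_of_le ht₁] using
      continuousOn_primitive_interval' (ha_int t₁ (left_mem_Icc.2 ht₁) t (right_mem_Icc.2 ht₁))
        left_mem_uIcc
  have hgeA_cont : ContinuousOn (fun s => g s * exp (A s)) (Icc t₁ t) :=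
    (hg.mono hsub).mul (continuous_exp.comp_continuousOn hA_cont)
  have hFTC : ∫ τ in t₁..t, g τ * exp (A τ) = -(w t * exp (A t)) - -(w t₁ * exp (A t₁)) := by
    have hw_cont : ContinuousOn w (Icc t₁ t) :=
      fun x hx => (hw x (hsub hx)).continuousAt.continuousWithinAt
    refine integral_eq_sub_of_hasDeriv_right_of_le ht₁
      ((hw_cont.mul (continuous_exp.comp_continuousOn hA_cont)).neg)
      (fun x hx => ?_) (hgeA_cont.intervalIntegrable_of_Icc ht₁)
    have hx' : x ∈ Ioo t₁ t₂ := ⟨hx.1, hx.2.trans ht₂⟩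
    refine (((hw x (Ioo_subset_Ico_self hx')).mul
      (hasDerivAt_primitive_of_continuousOn_Ico ha hx').exp).neg.congr_deriv ?_).hasDerivWithinAt
    ring
  have hsplit : ∀ τ ∈ uIcc t₁ t,
      exp (-∫ s in τ..t, a s) * g τ = exp (-A t) * (g τ * exp (A τ)) := by
    intro τ hτ
    rw [uIcc_of_le ht₁] at hτ
    rw [← integral_interval_sub_left (ha_int _ (left_mem_Icc.2 ht₁) _ (right_mem_Icc.2 ht₁))
      (ha_int _ (left_mem_Icc.2 ht₁) τ hτ), neg_sub, sub_eq_neg_add, exp_add]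
    ring
  have hA₀ : A t₁ = 0 := integral_same
  rw [integral_congr hsplit, intervalIntegral.integral_const_mul, hFTC, hA₀, exp_zero, exp_neg]
  field_simp
  ring

end LinearODE

theorem riccati_deriv_sub_eq (y y' p q r : Fin 2 → ℝ) (hp : ∀ i, p i ≠ 0)
    (hode : ∀ i, y' i + y i ^ 2 / p i + q i / p i * y i + r i = 0) (j : Fin 2) :
    y' 1 - y' 0 = -((y 0 + y 1 + q (1 - j)) / p (1 - j) * (y 1 - y 0)) -
      ((1 / p 1 - 1 / p 0) * y j ^ 2 + (q 1 / p 1 - q 0 / p 0) * y j + r 1 - r 0) := by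
  have hp₀ := hp 0
  have hp₁ := hp 1
  rw [eq_neg_add_of_add_eq (hode 0), eq_neg_add_of_add_eq (hode 1)]
  fin_cases j <;> simp only [Fin.zero_eta, Fin.mk_one, Fin.isValue, sub_zero, sub_self] <;>
    field_simp <;> ring

theorem stmt_7_general (t₁ t₂ : ℝ) (p q r y y' : Fin 2 → ℝ → ℝ)
    (hp : ∀ j, ContinuousOn (p j) (Set.Ico t₁ t₂))
    (hq : ∀ j, ContinuousOn (q j) (Set.Ico t₁ t₂))
    (hr : ∀ j, ContinuousOn (r j) (Set.Ico t₁ t₂))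
    (hppos : ∀ j, ∀ t ∈ Set.Ico t₁ t₂, 0 < p j t)
    (hy : ∀ j, ∀ t ∈ Set.Ico t₁ t₂, HasDerivAt (y j) (y' j t) t)
    (hode : ∀ j, ∀ t ∈ Set.Ico t₁ t₂,
      y' j t + (y j t) ^ 2 / p j t + (q j t / p j t) * y j t + r j t = 0) :
    ∀ j : Fin 2, ∀ t ∈ Set.Ico t₁ t₂,
      y 1 t - y 0 t =
        (y 1 t₁ - y 0 t₁) *
          Real.exp (-∫ τ in t₁..t,
            (y 0 τ + y 1 τ + q (1 - j) τ) / p (1 - j) τ)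
        - ∫ τ in t₁..t,
            Real.exp (-∫ s in τ..t,
              (y 0 s + y 1 s + q (1 - j) s) / p (1 - j) s) *
            ((1 / p 1 τ - 1 / p 0 τ) * (y j τ) ^ 2
              + (q 1 τ / p 1 τ - q 0 τ / p 0 τ) * y j τ
              + r 1 τ - r 0 τ) := by
  intro j t ht
  have hp_ne : ∀ i, ∀ x ∈ Ico t₁ t₂, p i x ≠ 0 := fun i x hx => (hppos i x hx).ne'
  have hy_cont : ∀ i, ContinuousOn (y i) (Ico t₁ t₂) :=
    fun i x hx => (hy i x hx).continuousAt.continuousWithinAt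
  refine eq_variation_of_constants (w := fun s => y 1 s - y 0 s)
    (by fun_prop (disch := exact hp_ne _)) (by fun_prop (disch := exact hp_ne _)) (fun x hx => ?_) ht
  exact ((hy 1 x hx).sub (hy 0 x hx)).congr_deriv (riccati_deriv_sub_eq (fun i => y i x)
    (fun i => y' i x) (fun i => p i x) (fun i => q i x) (fun i => r i x) (fun i => hp_ne i x hx)
    (fun i => hode i x hx) j)

/-- Formula (2.12ⱼ): difference of two Riccati solutions. -/
theorem stmt_7 (t₁ t₂ : ℝ) (ht : t₁ < t₂) (p q r y y' : Fin 2 → ℝ → ℝ)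
    (hp : ∀ j, ContinuousOn (p j) (Set.Ico t₁ t₂))
    (hq : ∀ j, ContinuousOn (q j) (Set.Ico t₁ t₂))
    (hr : ∀ j, ContinuousOn (r j) (Set.Ico t₁ t₂))
    (hppos : ∀ j, ∀ t ∈ Set.Ico t₁ t₂, 0 < p j t)
    (hy : ∀ j, ∀ t ∈ Set.Ico t₁ t₂, HasDerivAt (y j) (y' j t) t)
    (hy'c : ∀ j, ContinuousOn (y' j) (Set.Ico t₁ t₂))
    (hode : ∀ j, ∀ t ∈ Set.Ico t₁ t₂,
      y' j t + (y j t) ^ 2 / p j t + (q j t / p j t) * y j t + r j t = 0) :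
    ∀ j : Fin 2, ∀ t ∈ Set.Ico t₁ t₂,
      y 1 t - y 0 t =
        (y 1 t₁ - y 0 t₁) *
          Real.exp (-∫ τ in t₁..t,
            (y 0 τ + y 1 τ + q (1 - j) τ) / p (1 - j) τ)
        - ∫ τ in t₁..t,
            Real.exp (-∫ s in τ..t,
              (y 0 s + y 1 s + q (1 - j) s) / p (1 - j) s) *
            ((1 / p 1 τ - 1 / p 0 τ) * (y j τ) ^ 2
              + (q 1 τ / p 1 τ - q 0 τ / p 0 τ) * y j τ
              + r 1 τ - r 0 τ) :=
  stmt_7_general t₁ t₂ p q r y y' hp hq hr hppos hy hode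
end

section
/- Let P, Q, R be continuous on [t₁, t₂) with P > 0, and let p, q, r be continuous with p > 0. Suppose y₀ is a C¹ solution of y' + y²/p + (q/p)y + r = 0 on [t₁, t₂) with y₀(t) ≥ 0 on [t₁, t₂), and suppose P(t) ≥ p(t), Q(t)/P(t) ≤ q(t)/p(t), and R(t) ≤ r(t) for all t ∈ [t₁, t₂). Then any solution y₂ of the Riccati equation y' + y²/P + (Q/P)y + R = 0 with y₂(t₁) ≥ y₀(t₁) exists on the whole interval [t₁, t₂) (i.e., does not blow up before t₂). -/
/-!
Above a level `T` (uniform on compact time intervals) the term `-y² / P` makes the right-hand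
side of `y' = -(y² / P + (Q / P) y + R)` nonpositive, so a solution starting at `μ` stays below
`max μ T`. The coefficient inequalities make `y₀ ≥ 0` a subsolution of this equation, so a
solution starting above `y₀ t₁` stays above `y₀`. Hence on every `[t₁, s]` with `s < t₂` the
solution of the equation truncated to a bounded strip (which exists by Picard–Lindelöf) never
meets the edges of the strip and solves the true equation; by uniqueness these solutions glue
to one on `[t₁, t₂)`.
-/

open Set Filter Topology NNReal

theorem nonpos_of_hasDerivWithinAt_le_mul {f f' : ℝ → ℝ} {a b L : ℝ}
    (hf : ContinuousOn f (Icc a b)) (hf' : ∀ x ∈ Ico a b, HasDerivWithinAt f (f' x) (Ici x) x)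
    (ha : f a ≤ 0) (bound : ∀ x ∈ Ico a b, 0 < f x → f' x ≤ L * f x) :
    ∀ x ∈ Icc a b, f x ≤ 0 := by
  intro x hx
  -- `ε e^{(L + 1)(x - a)}` is a strict supersolution for every `ε > 0`
  have hfence : ∀ ε > 0, f x ≤ ε * Real.exp ((L + 1) * (x - a)) := by
    intro ε hε
    set B : ℝ → ℝ := fun y ↦ ε * Real.exp ((L + 1) * (y - a))
    have hB : ∀ y, HasDerivAt B ((L + 1) * B y) y := fun y ↦
      ((((hasDerivAt_id y).sub_const a).const_mul (L + 1)).exp.const_mul ε).congr_deriv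
        (by simp only [B, id]; ring)
    refine image_le_of_deriv_right_lt_deriv_boundary' hf hf' (B := B) ?_
      (fun y _ ↦ (hB y).continuousAt.continuousWithinAt) (fun y _ ↦ (hB y).hasDerivWithinAt)
      (fun y hy hfy ↦ ?_) hx
    · simp only [B, sub_self, mul_zero, Real.exp_zero, mul_one]
      linarith
    · have hBy : 0 < B y := by positivity
      calc f' y ≤ L * f y := bound y hy (hfy ▸ hBy)
        _ < (L + 1) * B y := by rw [hfy]; linarith
  by_contra! hpos
  have hE : 0 < Real.exp ((L + 1) * (x - a)) := Real.exp_pos _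
  have := hfence (f x / (2 * Real.exp ((L + 1) * (x - a)))) (by positivity)
  rw [div_mul_eq_mul_div, mul_div_mul_right _ _ hE.ne'] at this
  linarith

section Truncation

variable {F : ℝ → ℝ → ℝ} {lo hi : ℝ} {K : ℝ≥0}

theorem exists_eq_forall_mem_Icc_hasDerivWithinAt_projIcc {tmin tmax : ℝ}
    (t₀ : Icc tmin tmax) (x₀ : ℝ) (hlohi : lo ≤ hi)
    (hlip : ∀ t ∈ Icc tmin tmax, LipschitzOnWith K (F t) (Icc lo hi))
    (hcont : ∀ x ∈ Icc lo hi, ContinuousOn (F · x) (Icc tmin tmax)) :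
    ∃ z : ℝ → ℝ, z t₀ = x₀ ∧ ∀ t ∈ Icc tmin tmax,
      HasDerivWithinAt z (F t (projIcc lo hi hlohi (z t))) (Icc tmin tmax) t := by
  set G : ℝ → ℝ → ℝ := fun t y ↦ F t (projIcc lo hi hlohi y)
  have hproj : LipschitzWith 1 (fun y ↦ (projIcc lo hi hlohi y : ℝ)) := by
    have := (LipschitzWith.subtype_val (Icc lo hi)).comp (LipschitzWith.projIcc hlohi)
    rwa [mul_one] at this
  obtain ⟨C, hC⟩ := isCompact_Icc.exists_bound_of_continuousOn
    (hcont lo (left_mem_Icc.2 hlohi))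
  have hbound : ∀ t ∈ Icc tmin tmax, ∀ y, ‖G t y‖ ≤ C + K * (hi - lo) := by
    intro t ht y
    have hy := (projIcc lo hi hlohi y).2
    have hdist := (hlip t ht).dist_le_mul _ hy lo (left_mem_Icc.2 hlohi)
    rw [Real.dist_eq, Real.dist_eq, abs_of_nonneg (sub_nonneg.2 hy.1)] at hdist
    have hCt := hC t ht
    rw [Real.norm_eq_abs] at hCt ⊢
    calc |G t y| ≤ |F t lo| + |G t y - F t lo| := by
          linarith [abs_sub_abs_le_abs_sub (G t y) (F t lo)]
      _ ≤ C + K * (hi - lo) := by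
          gcongr
          exact hdist.trans (by gcongr; exact hy.2)
  set L := (C + K * (hi - lo)).toNNReal
  have hPL : IsPicardLindelof G t₀ x₀ (L * (tmax - tmin).toNNReal) 0 L K := by
    refine ⟨fun t ht ↦ ?_, fun y _ ↦ hcont _ (projIcc lo hi hlohi y).2,
      fun t ht y _ ↦ (hbound t ht y).trans (Real.le_coe_toNNReal _), ?_⟩
    · have := (hlip t ht).comp (hproj.lipschitzOnWith (s := univ))
        (fun y _ ↦ (projIcc lo hi hlohi y).2)
      rw [mul_one] at this
      exact this.mono (subset_univ _)
    · obtain ⟨h₁, h₂⟩ := t₀.2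
      rw [NNReal.coe_mul, Real.coe_toNNReal (tmax - tmin) (by linarith), NNReal.coe_zero,
        sub_zero]
      gcongr
      exact max_le (by linarith) (by linarith)
  exact hPL.exists_eq_forall_mem_Icc_hasDerivWithinAt₀

theorem exists_forall_mem_Icc_hasDerivAt_projIcc {a b : ℝ} (hab : a ≤ b) (x₀ : ℝ)
    (hlohi : lo ≤ hi) (hlip : ∀ t ∈ Icc a b, LipschitzOnWith K (F t) (Icc lo hi))
    (hcont : ∀ x ∈ Icc lo hi, ContinuousOn (F · x) (Icc a b)) :
    ∃ z : ℝ → ℝ, z a = x₀ ∧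
      ∀ t ∈ Icc a b, HasDerivAt z (F t (projIcc lo hi hlohi (z t))) t := by
  -- freezing the field outside `[a, b]` makes `a` and `b` interior points of the time interval
  set τ : ℝ → ℝ := fun t ↦ projIcc a b hab t
  have hτ : MapsTo τ (Icc (a - 1) (b + 1)) (Icc a b) := fun t _ ↦ (projIcc a b hab t).2
  obtain ⟨z, hza, hz⟩ := exists_eq_forall_mem_Icc_hasDerivWithinAt_projIcc
    (F := fun t ↦ F (τ t)) ⟨a, by linarith, by linarith⟩ x₀ hlohi
    (fun t ht ↦ hlip _ (hτ ht))
    (fun x hx ↦ (hcont x hx).comp (continuous_subtype_val.comp continuous_projIcc).continuousOn hτ)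
  refine ⟨z, hza, fun t ht ↦ ?_⟩
  have := (hz t ⟨by linarith [ht.1], by linarith [ht.2]⟩).hasDerivAt
    (Icc_mem_nhds (by linarith [ht.1]) (by linarith [ht.2]))
  rwa [show τ t = t from congrArg Subtype.val (projIcc_of_mem hab ht)] at this

theorem le_of_subsolution_of_hasDerivAt_projIcc {y₀ y₀' z : ℝ → ℝ} {a b : ℝ} (hlohi : lo ≤ hi)
    (hlip : ∀ t ∈ Ico a b, LipschitzOnWith K (F t) (Icc lo hi))
    (hy₀c : ContinuousOn y₀ (Icc a b))
    (hy₀ : ∀ t ∈ Ico a b, HasDerivWithinAt y₀ (y₀' t) (Ici t) t)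
    (hy₀mem : ∀ t ∈ Ico a b, y₀ t ∈ Icc lo hi) (hsub : ∀ t ∈ Ico a b, y₀' t ≤ F t (y₀ t))
    (hz : ∀ t ∈ Icc a b, HasDerivAt z (F t (projIcc lo hi hlohi (z t))) t) (ha : y₀ a ≤ z a) :
    ∀ t ∈ Icc a b, y₀ t ≤ z t := by
  set cl : ℝ → ℝ := fun y ↦ projIcc lo hi hlohi y
  refine fun t ht ↦ sub_nonpos.1 (nonpos_of_hasDerivWithinAt_le_mul
    (f := fun t ↦ y₀ t - z t) (L := K) (hy₀c.sub (HasDerivAt.continuousOn hz))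
    (fun t ht ↦ (hy₀ t ht).sub (hz t (Ico_subset_Icc_self ht)).hasDerivWithinAt)
    (sub_nonpos.2 ha) (fun t ht hpos ↦ ?_) t ht)
  have hcly : cl (y₀ t) = y₀ t := by simp only [cl, projIcc_of_mem _ (hy₀mem t ht)]
  calc y₀' t - F t (cl (z t)) ≤ F t (cl (y₀ t)) - F t (cl (z t)) := by
        rw [hcly]; linarith [hsub t ht]
    _ ≤ K * |cl (y₀ t) - cl (z t)| := by
        rw [← Real.dist_eq]
        exact (le_abs_self _).trans
          ((hlip t ht).dist_le_mul _ (projIcc _ _ _ _).2 _ (projIcc _ _ _ _).2)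
    _ ≤ K * (y₀ t - z t) := by
        rw [← abs_of_pos hpos]
        exact mul_le_mul_of_nonneg_left (abs_projIcc_sub_projIcc hlohi) K.2

end Truncation

theorem exists_forall_hasDerivAt_of_forall_lt {F : ℝ → ℝ → ℝ} {a b x₀ : ℝ}
    (hex : ∀ s ∈ Ioo a b, ∃ z : ℝ → ℝ, z a = x₀ ∧ ∀ t ∈ Ico a s, HasDerivAt z (F t (z t)) t)
    (huniq : ∀ s ∈ Ioo a b, ∀ z₁ z₂ : ℝ → ℝ,
      (∀ t ∈ Ico a s, HasDerivAt z₁ (F t (z₁ t)) t) →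
      (∀ t ∈ Ico a s, HasDerivAt z₂ (F t (z₂ t)) t) → z₁ a = z₂ a → EqOn z₁ z₂ (Ico a s)) :
    ∃ y : ℝ → ℝ, y a = x₀ ∧ ∀ t ∈ Ico a b, HasDerivAt y (F t (y t)) t := by
  rcases le_or_gt b a with hba | hab
  · exact ⟨fun _ ↦ x₀, rfl, fun t ht ↦ absurd (ht.1.trans_lt ht.2) hba.not_gt⟩
  choose! Z hZa hZ using hex
  set m : ℝ → ℝ := fun t ↦ (max t a + b) / 2
  have hm : ∀ t < b, m t ∈ Ioo a b ∧ t < m t := fun t ht ↦ by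
    have := le_max_left t a; have := le_max_right t a; have := max_lt ht hab
    simp only [m, mem_Ioo]
    exact ⟨⟨by linarith, by linarith⟩, by linarith⟩
  set y : ℝ → ℝ := fun t ↦ Z (m t) t
  have hyZ : ∀ s ∈ Ioo a b, EqOn y (Z s) (Ico a s) := by
    intro s hs τ hτ
    have hτm := hm τ (hτ.2.trans hs.2)
    have hmin : min s (m τ) ∈ Ioo a b :=
      ⟨lt_min hs.1 hτm.1.1, (min_le_left _ _).trans_lt hs.2⟩
    exact huniq _ hmin _ _
      (fun t ht ↦ hZ _ hτm.1 t ⟨ht.1, ht.2.trans_le (min_le_right _ _)⟩)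
      (fun t ht ↦ hZ _ hs t ⟨ht.1, ht.2.trans_le (min_le_left _ _)⟩)
      ((hZa _ hτm.1).trans (hZa _ hs).symm) ⟨hτ.1, lt_min hτ.2 hτm.2⟩
  refine ⟨y, hZa _ (hm a hab).1, fun t ht ↦ ?_⟩
  obtain ⟨hmt, htm⟩ := hm t ht.2
  have hloc : y =ᶠ[𝓝 t] Z (m t) := by
    rcases ht.1.eq_or_lt with rfl | hat
    · refine eventuallyEq_of_mem (Iio_mem_nhds htm) fun τ hτ ↦ ?_
      rcases lt_or_ge τ a with hτa | hτa
      · simp only [y, m, max_eq_right hτa.le, max_self]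
      · exact hyZ _ hmt ⟨hτa, hτ⟩
    · exact eventuallyEq_of_mem (Ioo_mem_nhds hat htm) fun τ hτ ↦ hyZ _ hmt ⟨hτ.1.le, hτ.2⟩
  rw [hloc.eq_of_nhds]
  exact (hZ _ hmt t ⟨ht.1, htm⟩).congr_of_eventuallyEq hloc

noncomputable def riccati (P Q R : ℝ → ℝ) (t y : ℝ) : ℝ := -(y ^ 2 / P t + Q t / P t * y + R t)

section Riccati

variable {P Q R : ℝ → ℝ}

theorem riccati_le_riccati {p q r : ℝ → ℝ} {t y : ℝ} (hp : 0 < p t) (hpP : p t ≤ P t)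
    (hQq : Q t / P t ≤ q t / p t) (hRr : R t ≤ r t) (hy : 0 ≤ y) :
    riccati p q r t y ≤ riccati P Q R t y := by
  have hsq : y ^ 2 / P t ≤ y ^ 2 / p t := div_le_div_of_nonneg_left (sq_nonneg y) hp hpP
  have hlin : Q t / P t * y ≤ q t / p t * y := mul_le_mul_of_nonneg_right hQq hy
  simp only [riccati]
  linarith

theorem lipschitzOnWith_riccati {t N c cq : ℝ} (hc : |(P t)⁻¹| ≤ c) (hcq : |Q t / P t| ≤ cq) :
    LipschitzOnWith (2 * |N| * c + cq).toNNReal (riccati P Q R t) (Icc (-N) N) := by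
  have hc0 : 0 ≤ c := (abs_nonneg _).trans hc
  have hcq0 : 0 ≤ cq := (abs_nonneg _).trans hcq
  refine LipschitzOnWith.of_dist_le_mul fun u hu v hv ↦ ?_
  have huv : |u + v| ≤ 2 * |N| := by
    have := abs_le.2 hu; have := abs_le.2 hv
    linarith [abs_add_le u v, le_abs_self N]
  have hdiff : riccati P Q R t u - riccati P Q R t v
      = -((u + v) * (P t)⁻¹ + Q t / P t) * (u - v) := by
    simp only [riccati]; ring
  rw [Real.dist_eq, Real.dist_eq, hdiff, abs_mul, abs_neg,
    Real.coe_toNNReal _ (by positivity)]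
  gcongr
  calc |(u + v) * (P t)⁻¹ + Q t / P t| ≤ |u + v| * |(P t)⁻¹| + |Q t / P t| := by
        rw [← abs_mul]; exact abs_add_le _ _
    _ ≤ 2 * |N| * c + cq := by gcongr

theorem exists_lipschitzOnWith_riccati {K : Set ℝ} (hK : IsCompact K)
    (hP : ContinuousOn P K) (hQ : ContinuousOn Q K) (hP0 : ∀ t ∈ K, P t ≠ 0) (N : ℝ) :
    ∃ L : ℝ≥0, ∀ t ∈ K, LipschitzOnWith L (riccati P Q R t) (Icc (-N) N) := by
  obtain ⟨c, hc⟩ := hK.exists_bound_of_continuousOn (hP.inv₀ hP0)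
  obtain ⟨cq, hcq⟩ := hK.exists_bound_of_continuousOn (hQ.div hP hP0)
  exact ⟨_, fun t ht ↦ lipschitzOnWith_riccati (hc t ht) (hcq t ht)⟩

theorem exists_riccati_nonpos {K : Set ℝ} (hK : IsCompact K)
    (hP : ContinuousOn P K) (hQ : ContinuousOn Q K) (hR : ContinuousOn R K)
    (hPpos : ∀ t ∈ K, 0 < P t) :
    ∃ T, ∀ t ∈ K, ∀ y, T ≤ y → riccati P Q R t y ≤ 0 := by
  obtain ⟨pM, hpM⟩ := hK.exists_bound_of_continuousOn hP
  obtain ⟨cq, hcq⟩ := hK.exists_bound_of_continuousOn (hQ.div hP fun t ht ↦ (hPpos t ht).ne')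
  obtain ⟨cr, hcr⟩ := hK.exists_bound_of_continuousOn hR
  refine ⟨max 1 (pM * (cq + cr)), fun t ht y hy ↦ ?_⟩
  have hPt := hPpos t ht
  have hPM : P t ≤ pM := (le_abs_self _).trans (hpM t ht)
  have hQt : |Q t / P t| ≤ cq := hcq t ht
  have hRt : |R t| ≤ cr := hcr t ht
  have hy1 : 1 ≤ y := (le_max_left _ _).trans hy
  have hyM : pM * (cq + cr) ≤ y := (le_max_right _ _).trans hy
  have hcr : 0 ≤ cr := (abs_nonneg _).trans hRt
  have hcqr : 0 ≤ cq + cr := add_nonneg ((abs_nonneg _).trans hQt) hcr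
  have hsq : (cq + cr) * y ≤ y ^ 2 / P t := by
    rw [le_div_iff₀ hPt]
    nlinarith [mul_le_mul_of_nonneg_left hPM hcqr]
  have hlin : -(Q t / P t * y) ≤ cq * y := by
    rw [← neg_mul]
    exact mul_le_mul_of_nonneg_right ((neg_le_abs _).trans hQt) (by linarith)
  have hconst : -R t ≤ cr * y :=
    ((neg_le_abs _).trans hRt).trans (le_mul_of_one_le_right hcr hy1)
  simp only [riccati]
  linarith

theorem eqOn_Ico_of_hasDerivAt_riccati {z₁ z₂ : ℝ → ℝ} {a b : ℝ}
    (hP : ContinuousOn P (Ico a b)) (hQ : ContinuousOn Q (Ico a b))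
    (hP0 : ∀ t ∈ Ico a b, P t ≠ 0)
    (hz₁ : ∀ t ∈ Ico a b, HasDerivAt z₁ (riccati P Q R t (z₁ t)) t)
    (hz₂ : ∀ t ∈ Ico a b, HasDerivAt z₂ (riccati P Q R t (z₂ t)) t) (ha : z₁ a = z₂ a) :
    EqOn z₁ z₂ (Ico a b) := by
  intro τ hτ
  have hsub : Icc a τ ⊆ Ico a b := Icc_subset_Ico_right hτ.2
  have hc₁ : ContinuousOn z₁ (Icc a τ) := HasDerivAt.continuousOn fun t ht ↦ hz₁ t (hsub ht)
  have hc₂ : ContinuousOn z₂ (Icc a τ) := HasDerivAt.continuousOn fun t ht ↦ hz₂ t (hsub ht)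
  obtain ⟨N₁, hN₁⟩ := isCompact_Icc.exists_bound_of_continuousOn hc₁
  obtain ⟨N₂, hN₂⟩ := isCompact_Icc.exists_bound_of_continuousOn hc₂
  set N := max N₁ N₂
  obtain ⟨L, hL⟩ := exists_lipschitzOnWith_riccati (R := R) isCompact_Icc (hP.mono hsub)
    (hQ.mono hsub) (fun t ht ↦ hP0 t (hsub ht)) N
  exact ODE_solution_unique_of_mem_Icc_right (s := fun _ ↦ Icc (-N) N)
    (fun t ht ↦ hL t (Ico_subset_Icc_self ht))
    hc₁ (fun t ht ↦ (hz₁ t (hsub (Ico_subset_Icc_self ht))).hasDerivWithinAt)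
    (fun t ht ↦ abs_le.1 ((hN₁ t (Ico_subset_Icc_self ht)).trans (le_max_left _ _)))
    hc₂ (fun t ht ↦ (hz₂ t (hsub (Ico_subset_Icc_self ht))).hasDerivWithinAt)
    (fun t ht ↦ abs_le.1 ((hN₂ t (Ico_subset_Icc_self ht)).trans (le_max_right _ _)))
    ha ⟨hτ.1, le_rfl⟩

theorem exists_hasDerivAt_riccati_of_subsolution {y₀ y₀' : ℝ → ℝ} {a b μ : ℝ}
    (hab : a ≤ b) (hP : ContinuousOn P (Icc a b)) (hQ : ContinuousOn Q (Icc a b))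
    (hR : ContinuousOn R (Icc a b)) (hPpos : ∀ t ∈ Icc a b, 0 < P t)
    (hy₀c : ContinuousOn y₀ (Icc a b))
    (hy₀ : ∀ t ∈ Ico a b, HasDerivWithinAt y₀ (y₀' t) (Ici t) t)
    (hsub : ∀ t ∈ Ico a b, y₀' t ≤ riccati P Q R t (y₀ t)) (hμ : y₀ a ≤ μ) :
    ∃ z : ℝ → ℝ, z a = μ ∧ ∀ t ∈ Ico a b, HasDerivAt z (riccati P Q R t (z t)) t := by
  have hP0 : ∀ t ∈ Icc a b, P t ≠ 0 := fun t ht ↦ (hPpos t ht).ne'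
  obtain ⟨T, hT⟩ := exists_riccati_nonpos isCompact_Icc hP hQ hR hPpos
  obtain ⟨b₀, hb₀⟩ := isCompact_Icc.exists_bound_of_continuousOn hy₀c
  set C := max μ T
  set M := max C b₀
  obtain ⟨L, hL⟩ := exists_lipschitzOnWith_riccati (R := R) isCompact_Icc hP hQ hP0 M
  have hy₀M : ∀ t ∈ Icc a b, y₀ t ∈ Icc (-M) M := fun t ht ↦
    abs_le.1 ((hb₀ t ht).trans (le_max_right _ _))
  have hM : -M ≤ M := (hy₀M a ⟨le_rfl, hab⟩).1.trans (hy₀M a ⟨le_rfl, hab⟩).2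
  have hcont : ∀ x ∈ Icc (-M) M, ContinuousOn (riccati P Q R · x) (Icc a b) := fun x _ ↦ by
    simp only [riccati]
    fun_prop (disch := assumption)
  obtain ⟨z, hza, hz⟩ := exists_forall_mem_Icc_hasDerivAt_projIcc hab μ hM hL hcont
  have hupper : ∀ t ∈ Icc a b, z t ≤ C := by
    refine fun t ht ↦ sub_nonpos.1 (nonpos_of_hasDerivWithinAt_le_mul
      (f := fun t ↦ z t - C) (L := 0) ((HasDerivAt.continuousOn hz).sub continuousOn_const)
      (fun t ht ↦ ((hz t (Ico_subset_Icc_self ht)).sub_const C).hasDerivWithinAt)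
      (by simp only [hza, sub_nonpos]; exact le_max_left μ T) (fun t ht hpos ↦ ?_) t ht)
    rw [zero_mul]
    refine hT t (Ico_subset_Icc_self ht) _ ((le_max_right μ T).trans ?_)
    rw [coe_projIcc]
    exact le_max_of_le_right (le_min (le_max_left _ _) (by linarith))
  have hlower := le_of_subsolution_of_hasDerivAt_projIcc hM
    (fun t ht ↦ hL t (Ico_subset_Icc_self ht)) hy₀c hy₀
    (fun t ht ↦ hy₀M t (Ico_subset_Icc_self ht)) hsub hz (hza ▸ hμ)
  refine ⟨z, hza, fun t ht ↦ ?_⟩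
  replace ht := Ico_subset_Icc_self ht
  have hzM : z t ∈ Icc (-M) M :=
    ⟨(hy₀M t ht).1.trans (hlower t ht), (hupper t ht).trans (le_max_left _ _)⟩
  simpa only [projIcc_of_mem hM hzM] using hz t ht

end Riccati

theorem stmt_9_general (t₁ t₂ : ℝ) (p q r P Q R y₀ y₀' : ℝ → ℝ)
    (hP : ContinuousOn P (Set.Ico t₁ t₂)) (hQ : ContinuousOn Q (Set.Ico t₁ t₂))
    (hR : ContinuousOn R (Set.Ico t₁ t₂))
    (hppos : ∀ t ∈ Set.Ico t₁ t₂, 0 < p t)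
    (hPpos : ∀ t ∈ Set.Ico t₁ t₂, 0 < P t)
    (hy₀ : ∀ t ∈ Set.Ico t₁ t₂, HasDerivAt y₀ (y₀' t) t)
    (hode₀ : ∀ t ∈ Set.Ico t₁ t₂,
      y₀' t + (y₀ t) ^ 2 / p t + (q t / p t) * y₀ t + r t = 0)
    (hy₀nn : ∀ t ∈ Set.Ico t₁ t₂, 0 ≤ y₀ t)
    (hPp : ∀ t ∈ Set.Ico t₁ t₂, p t ≤ P t)
    (hQq : ∀ t ∈ Set.Ico t₁ t₂, Q t / P t ≤ q t / p t)
    (hRr : ∀ t ∈ Set.Ico t₁ t₂, R t ≤ r t) :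
    ∀ μ : ℝ, y₀ t₁ ≤ μ →
      ∃ y₂ y₂' : ℝ → ℝ, y₂ t₁ = μ ∧
        (∀ t ∈ Set.Ico t₁ t₂, HasDerivAt y₂ (y₂' t) t) ∧
        (∀ t ∈ Set.Ico t₁ t₂,
          y₂' t + (y₂ t) ^ 2 / P t + (Q t / P t) * y₂ t + R t = 0) := by
  intro μ hμ
  have hsubsol : ∀ t ∈ Ico t₁ t₂, y₀' t ≤ riccati P Q R t (y₀ t) := fun t ht ↦
    calc y₀' t = riccati p q r t (y₀ t) := by simp only [riccati]; linarith [hode₀ t ht]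
      _ ≤ riccati P Q R t (y₀ t) :=
        riccati_le_riccati (hppos t ht) (hPp t ht) (hQq t ht) (hRr t ht) (hy₀nn t ht)
  have hex : ∀ s ∈ Ioo t₁ t₂, ∃ z : ℝ → ℝ, z t₁ = μ ∧
      ∀ t ∈ Ico t₁ s, HasDerivAt z (riccati P Q R t (z t)) t := fun s hs ↦ by
    have hsub : Icc t₁ s ⊆ Ico t₁ t₂ := Icc_subset_Ico_right hs.2
    exact exists_hasDerivAt_riccati_of_subsolution hs.1.le (hP.mono hsub) (hQ.mono hsub)
      (hR.mono hsub) (fun t ht ↦ hPpos t (hsub ht))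
      (HasDerivAt.continuousOn fun t ht ↦ hy₀ t (hsub ht))
      (fun t ht ↦ (hy₀ t (hsub (Ico_subset_Icc_self ht))).hasDerivWithinAt)
      (fun t ht ↦ hsubsol t (hsub (Ico_subset_Icc_self ht))) hμ
  obtain ⟨y₂, hy₂μ, hy₂⟩ := exists_forall_hasDerivAt_of_forall_lt hex fun s hs _ _ ↦
    have hsub : Ico t₁ s ⊆ Ico t₁ t₂ := Ico_subset_Ico_right hs.2.le
    eqOn_Ico_of_hasDerivAt_riccati (hP.mono hsub) (hQ.mono hsub)
      fun t ht ↦ (hPpos t (hsub ht)).ne'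
  exact ⟨y₂, fun t ↦ riccati P Q R t (y₂ t), hy₂μ, hy₂, fun t _ ↦ by simp only [riccati]; ring⟩

/-- Lemma 2.6: if `y₀ ≥ 0` solves `y' + y²/p + (q/p)y + r = 0` on `[t₁, t₂)` and
`P ≥ p`, `Q/P ≤ q/p`, `R ≤ r` there, then for every initial value `μ ≥ y₀(t₁)`
the Riccati equation `y' + y²/P + (Q/P)y + R = 0` has a solution on all of
`[t₁, t₂)` with `y(t₁) = μ`. -/
theorem stmt_9 (t₁ t₂ : ℝ) (ht : t₁ < t₂) (p q r P Q R y₀ y₀' : ℝ → ℝ)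
    (hp : ContinuousOn p (Set.Ico t₁ t₂)) (hq : ContinuousOn q (Set.Ico t₁ t₂))
    (hr : ContinuousOn r (Set.Ico t₁ t₂))
    (hP : ContinuousOn P (Set.Ico t₁ t₂)) (hQ : ContinuousOn Q (Set.Ico t₁ t₂))
    (hR : ContinuousOn R (Set.Ico t₁ t₂))
    (hppos : ∀ t ∈ Set.Ico t₁ t₂, 0 < p t)
    (hPpos : ∀ t ∈ Set.Ico t₁ t₂, 0 < P t)
    (hy₀ : ∀ t ∈ Set.Ico t₁ t₂, HasDerivAt y₀ (y₀' t) t)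
    (hy₀'c : ContinuousOn y₀' (Set.Ico t₁ t₂))
    (hode₀ : ∀ t ∈ Set.Ico t₁ t₂,
      y₀' t + (y₀ t) ^ 2 / p t + (q t / p t) * y₀ t + r t = 0)
    (hy₀nn : ∀ t ∈ Set.Ico t₁ t₂, 0 ≤ y₀ t)
    (hPp : ∀ t ∈ Set.Ico t₁ t₂, p t ≤ P t)
    (hQq : ∀ t ∈ Set.Ico t₁ t₂, Q t / P t ≤ q t / p t)
    (hRr : ∀ t ∈ Set.Ico t₁ t₂, R t ≤ r t) :
    ∀ μ : ℝ, y₀ t₁ ≤ μ →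
      ∃ y₂ y₂' : ℝ → ℝ, y₂ t₁ = μ ∧
        (∀ t ∈ Set.Ico t₁ t₂, HasDerivAt y₂ (y₂' t) t) ∧
        (∀ t ∈ Set.Ico t₁ t₂,
          y₂' t + (y₂ t) ^ 2 / P t + (Q t / P t) * y₂ t + R t = 0) :=
  stmt_9_general t₁ t₂ p q r P Q R y₀ y₀' hP hQ hR hppos hPpos hy₀ hode₀ hy₀nn hPp hQq hRr
end

section
/- Let p, q, r be continuous on [t₁, t₂) with p > 0, μ := y(t₁) ≥ 0, and suppose P, Q, R are continuous with P > 0, and p(t) ≥ P(t), q(t)/p(t) ≥ Q(t), R(t) ≤ r(t) ≤ 0 on [t₁, t₂). If y is a nonnegative solution of y' + y²/p + (q/p)y + r = 0 on [t₁, t₂), then ∫_{t₁}^t y(τ)/p(τ) dτ ≤ μ·∫_{t₁}^t exp(−∫_{t₁}^τ Q(s) ds)/P(τ) dτ − ∫_{t₁}^t (1/P(τ))·(∫_{t₁}^τ exp(−∫_s^τ Q(ξ) dξ)·R(s) ds) dτ for all t ∈ [t₁, t₂). -/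
open Set intervalIntegral MeasureTheory

/-- FTC helper: the primitive of a continuous function has the obvious derivative. -/
lemma primitive_hasDerivAt {f : ℝ → ℝ} (hf : Continuous f) (a x : ℝ) :
    HasDerivAt (fun u => ∫ s in a..u, f s) (f x) x :=
  intervalIntegral.integral_hasDerivAt_right (hf.intervalIntegrable a x)
    (hf.stronglyMeasurable.stronglyMeasurableAtFilter) hf.continuousAt

/-- Lemma 2.3 (simplified form): integral bound for a nonnegative Riccati solution
under unconditional coefficient comparison. -/
theorem stmt_16 (t₁ t₂ : ℝ) (ht : t₁ < t₂) (p q r P Q R y y' : ℝ → ℝ)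
    (hp : ContinuousOn p (Set.Ico t₁ t₂)) (hq : ContinuousOn q (Set.Ico t₁ t₂))
    (hr : ContinuousOn r (Set.Ico t₁ t₂))
    (hP : ContinuousOn P (Set.Ico t₁ t₂)) (hQ : ContinuousOn Q (Set.Ico t₁ t₂))
    (hR : ContinuousOn R (Set.Ico t₁ t₂))
    (hppos : ∀ t ∈ Set.Ico t₁ t₂, 0 < p t)
    (hPpos : ∀ t ∈ Set.Ico t₁ t₂, 0 < P t)
    (hy : ∀ t ∈ Set.Ico t₁ t₂, HasDerivAt y (y' t) t)
    (hy'c : ContinuousOn y' (Set.Ico t₁ t₂))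
    (hode : ∀ t ∈ Set.Ico t₁ t₂,
      y' t + (y t) ^ 2 / p t + (q t / p t) * y t + r t = 0)
    (hynn : ∀ t ∈ Set.Ico t₁ t₂, 0 ≤ y t)
    (hμ : 0 ≤ y t₁)
    (hpP : ∀ t ∈ Set.Ico t₁ t₂, P t ≤ p t)
    (hqQ : ∀ t ∈ Set.Ico t₁ t₂, Q t ≤ q t / p t)
    (hRr : ∀ t ∈ Set.Ico t₁ t₂, R t ≤ r t)
    (hrnp : ∀ t ∈ Set.Ico t₁ t₂, r t ≤ 0) :
    ∀ t ∈ Set.Ico t₁ t₂,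
      (∫ τ in t₁..t, y τ / p τ)
        ≤ y t₁ * (∫ τ in t₁..t, Real.exp (-∫ s in t₁..τ, Q s) / P τ)
          - ∫ τ in t₁..t, (1 / P τ) *
              ∫ s in t₁..τ, Real.exp (-∫ ξ in s..τ, Q ξ) * R s := by
  intro t htmem
  obtain ⟨ht1, ht2⟩ := htmem
  rcases eq_or_lt_of_le ht1 with heq | hlt
  · rw [← heq]
    simp
  -- setup: extend Q and R continuously beyond [t₁, t]
  set t' : ℝ := (t + t₂) / 2 with ht'def
  have htt' : t < t' := by dsimp [t']; linarith
  have ht't2 : t' < t₂ := by dsimp [t']; linarith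
  have ht1t' : t₁ ≤ t' := le_trans ht1 htt'.le
  have hsub : Icc t₁ t' ⊆ Ico t₁ t₂ := fun x hx => ⟨hx.1, lt_of_le_of_lt hx.2 ht't2⟩
  have hsubt : Icc t₁ t ⊆ Icc t₁ t' := Icc_subset_Icc le_rfl htt'.le
  have hsubt2 : Icc t₁ t ⊆ Ico t₁ t₂ := fun x hx => hsub (hsubt hx)
  set π : ℝ → ℝ := fun x => max t₁ (min t' x) with hπdef
  have hπcont : Continuous π := continuous_const.max (continuous_const.min continuous_id)
  have hπmem : ∀ x, π x ∈ Icc t₁ t' :=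
    fun x => ⟨le_max_left _ _, max_le ht1t' (min_le_left _ _)⟩
  have hπid : ∀ x ∈ Icc t₁ t', π x = x := by
    intro x hx
    dsimp [π]
    rw [min_eq_right hx.2, max_eq_right hx.1]
  set Qt : ℝ → ℝ := fun x => Q (π x) with hQtdef
  set Rt : ℝ → ℝ := fun x => R (π x) with hRtdef
  have hQtc : Continuous Qt := (hQ.mono hsub).comp_continuous hπcont hπmem
  have hRtc : Continuous Rt := (hR.mono hsub).comp_continuous hπcont hπmem
  have hQteq : ∀ x ∈ Icc t₁ t', Qt x = Q x := fun x hx => by dsimp [Qt]; rw [hπid x hx]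
  have hRteq : ∀ x ∈ Icc t₁ t', Rt x = R x := fun x hx => by dsimp [Rt]; rw [hπid x hx]
  set A : ℝ → ℝ := fun τ => ∫ s in t₁..τ, Qt s with hAdef
  have hAderiv : ∀ τ, HasDerivAt A (Qt τ) τ := fun τ => primitive_hasDerivAt hQtc t₁ τ
  have hAcont : Continuous A := by
    rw [continuous_iff_continuousAt]; exact fun τ => (hAderiv τ).continuousAt
  set E : ℝ → ℝ := fun τ => Real.exp (A τ) with hEdef
  have hEderiv : ∀ τ, HasDerivAt E (Real.exp (A τ) * Qt τ) τ := fun τ => (hAderiv τ).exp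
  have hEcont : Continuous E := Real.continuous_exp.comp hAcont
  have hEpos : ∀ τ, 0 < E τ := fun τ => Real.exp_pos _
  set B : ℝ → ℝ := fun τ => ∫ s in t₁..τ, E s * Rt s with hBdef
  have hBderiv : ∀ τ, HasDerivAt B (E τ * Rt τ) τ :=
    fun τ => primitive_hasDerivAt (hEcont.mul hRtc) t₁ τ
  have hBcont : Continuous B := by
    rw [continuous_iff_continuousAt]; exact fun τ => (hBderiv τ).continuousAt
  -- the Gronwall-type bound: y τ * E τ ≤ y t₁ - B τ on [t₁, t]
  set F : ℝ → ℝ := fun τ => y t₁ - B τ - y τ * E τ with hFdef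
  have hycont : ContinuousOn y (Icc t₁ t) := fun τ hτ =>
    ((hy τ (hsubt2 hτ)).continuousAt).continuousWithinAt
  have hFderiv : ∀ τ ∈ Icc t₁ t, HasDerivAt F
      (-(E τ * Rt τ) - (y' τ * E τ + y τ * (Real.exp (A τ) * Qt τ))) τ := by
    intro τ hτ
    exact ((hBderiv τ).const_sub (y t₁)).sub ((hy τ (hsubt2 hτ)).mul (hEderiv τ))
  have hFderiv_nonneg : ∀ τ ∈ Icc t₁ t,
      0 ≤ -(E τ * Rt τ) - (y' τ * E τ + y τ * (Real.exp (A τ) * Qt τ)) := by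
    intro τ hτ
    have hτ2 : τ ∈ Ico t₁ t₂ := hsubt2 hτ
    have hodeτ := hode τ hτ2
    have hy'τ : y' τ = -((y τ) ^ 2 / p τ + (q τ / p τ) * y τ + r τ) := by linarith
    have hQτ : Qt τ = Q τ := hQteq τ (hsubt hτ)
    have hRτ : Rt τ = R τ := hRteq τ (hsubt hτ)
    have h1 : 0 ≤ (y τ) ^ 2 / p τ := div_nonneg (sq_nonneg _) (hppos τ hτ2).le
    have h2 : Qt τ * y τ ≤ (q τ / p τ) * y τ := by
      rw [hQτ]; exact mul_le_mul_of_nonneg_right (hqQ τ hτ2) (hynn τ hτ2)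
    have h3 : Rt τ ≤ r τ := by rw [hRτ]; exact hRr τ hτ2
    have hE' : 0 < E τ := hEpos τ
    have key : y' τ + y τ * Qt τ + Rt τ ≤ 0 := by
      rw [hy'τ]; nlinarith [h1, h2, h3]
    have : (y' τ + y τ * Qt τ + Rt τ) * E τ ≤ 0 :=
      mul_nonpos_of_nonpos_of_nonneg key hE'.le
    have hEe : Real.exp (A τ) = E τ := rfl
    nlinarith [this]
  have hFcont : ContinuousOn F (Icc t₁ t) :=
    (continuousOn_const.sub hBcont.continuousOn).sub (hycont.mul hEcont.continuousOn)
  have hFmono : MonotoneOn F (Icc t₁ t) := by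
    apply monotoneOn_of_deriv_nonneg (convex_Icc t₁ t) hFcont
    · intro x hx
      rw [interior_Icc] at hx
      exact (hFderiv x (Ioo_subset_Icc_self hx)).differentiableAt.differentiableWithinAt
    · intro x hx
      rw [interior_Icc] at hx
      rw [(hFderiv x (Ioo_subset_Icc_self hx)).deriv]
      exact hFderiv_nonneg x (Ioo_subset_Icc_self hx)
  have hF0 : F t₁ = 0 := by
    have hE1 : E t₁ = 1 := by
      show Real.exp (∫ s in t₁..t₁, Qt s) = 1
      simp
    show y t₁ - (∫ s in t₁..t₁, E s * Rt s) - y t₁ * E t₁ = 0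
    rw [hE1]
    simp
  have hgbound : ∀ τ ∈ Icc t₁ t, y τ * E τ ≤ y t₁ - B τ := by
    intro τ hτ
    have := hFmono (left_mem_Icc.2 (le_trans hlt.le le_rfl)) hτ hτ.1
    rw [hF0] at this
    dsimp [F] at this
    linarith
  -- rewrite the RHS integrals using A, E, B
  have hPposI : ∀ τ ∈ Icc t₁ t, 0 < P τ := fun τ hτ => hPpos τ (hsubt2 hτ)
  have eqA : ∀ τ ∈ Icc t₁ t, (∫ s in t₁..τ, Q s) = A τ := by
    intro τ hτ
    apply intervalIntegral.integral_congr
    intro s hs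
    rw [uIcc_of_le hτ.1] at hs
    exact (hQteq s (hsubt (Icc_subset_Icc le_rfl hτ.2 hs))).symm
  have eqInner : ∀ τ ∈ Icc t₁ t,
      (∫ s in t₁..τ, Real.exp (-∫ ξ in s..τ, Q ξ) * R s) = (E τ)⁻¹ * B τ := by
    intro τ hτ
    have step : (∫ s in t₁..τ, Real.exp (-∫ ξ in s..τ, Q ξ) * R s)
        = ∫ s in t₁..τ, (E τ)⁻¹ * (E s * Rt s) := by
      apply intervalIntegral.integral_congr
      intro s hs
      rw [uIcc_of_le hτ.1] at hs
      show Real.exp (-∫ ξ in s..τ, Q ξ) * R s = (E τ)⁻¹ * (E s * Rt s)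
      have hsI : s ∈ Icc t₁ t := Icc_subset_Icc le_rfl hτ.2 hs
      have hQint : (∫ ξ in s..τ, Q ξ) = A τ - A s := by
        have e1 : (∫ ξ in s..τ, Q ξ) = ∫ ξ in s..τ, Qt ξ := by
          apply intervalIntegral.integral_congr
          intro ξ hξ
          rw [uIcc_of_le hs.2] at hξ
          have : ξ ∈ Icc t₁ t := ⟨le_trans hsI.1 hξ.1, le_trans hξ.2 hτ.2⟩
          exact (hQteq ξ (hsubt this)).symm
        have e2 : A s + (∫ ξ in s..τ, Qt ξ) = A τ :=
          intervalIntegral.integral_add_adjacent_intervals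
            (hQtc.intervalIntegrable t₁ s) (hQtc.intervalIntegrable s τ)
        rw [e1]; linarith
      rw [hQint, hRteq s (hsubt hsI), neg_sub, Real.exp_sub]
      show Real.exp (A s) / Real.exp (A τ) * R s = (Real.exp (A τ))⁻¹ * (Real.exp (A s) * R s)
      field_simp
    rw [step, intervalIntegral.integral_const_mul]
  have eqRHS1 : (∫ τ in t₁..t, Real.exp (-∫ s in t₁..τ, Q s) / P τ)
      = ∫ τ in t₁..t, (E τ)⁻¹ / P τ := by
    apply intervalIntegral.integral_congr
    intro τ hτ
    rw [uIcc_of_le ht1] at hτ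
    show Real.exp (-∫ s in t₁..τ, Q s) / P τ = (E τ)⁻¹ / P τ
    rw [eqA τ hτ]
    show Real.exp (-A τ) / P τ = (Real.exp (A τ))⁻¹ / P τ
    rw [Real.exp_neg]
  have eqRHS2 : (∫ τ in t₁..t, (1 / P τ) * ∫ s in t₁..τ, Real.exp (-∫ ξ in s..τ, Q ξ) * R s)
      = ∫ τ in t₁..t, (1 / P τ) * ((E τ)⁻¹ * B τ) := by
    apply intervalIntegral.integral_congr
    intro τ hτ
    rw [uIcc_of_le ht1] at hτ
    show (1 / P τ) * (∫ s in t₁..τ, Real.exp (-∫ ξ in s..τ, Q ξ) * R s)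
        = (1 / P τ) * ((E τ)⁻¹ * B τ)
    rw [eqInner τ hτ]
  rw [eqRHS1, eqRHS2]
  -- continuity of the pieces on [t₁, t]
  have hPc : ContinuousOn P (Icc t₁ t) := hP.mono hsubt2
  have hPne : ∀ τ ∈ Icc t₁ t, P τ ≠ 0 := fun τ hτ => (hPposI τ hτ).ne'
  have hu_cont : ContinuousOn (fun τ => (E τ)⁻¹ / P τ) (Icc t₁ t) :=
    ((hEcont.continuousOn.inv₀ (fun τ _ => (hEpos τ).ne')).div hPc hPne)
  have hv_cont : ContinuousOn (fun τ => (1 / P τ) * ((E τ)⁻¹ * B τ)) (Icc t₁ t) := by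
    apply ContinuousOn.mul
    · exact (continuousOn_const.div hPc hPne)
    · exact (hEcont.continuousOn.inv₀ (fun τ _ => (hEpos τ).ne')).mul hBcont.continuousOn
  have hlhs_cont : ContinuousOn (fun τ => y τ / p τ) (Icc t₁ t) :=
    hycont.div (hp.mono hsubt2) (fun τ hτ => (hppos τ (hsubt2 hτ)).ne')
  have hu_int : IntervalIntegrable (fun τ => (E τ)⁻¹ / P τ) MeasureTheory.volume t₁ t := by
    apply ContinuousOn.intervalIntegrable; rwa [uIcc_of_le ht1]
  have hv_int : IntervalIntegrable (fun τ => (1 / P τ) * ((E τ)⁻¹ * B τ))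
      MeasureTheory.volume t₁ t := by
    apply ContinuousOn.intervalIntegrable; rwa [uIcc_of_le ht1]
  have hlhs_int : IntervalIntegrable (fun τ => y τ / p τ) MeasureTheory.volume t₁ t := by
    apply ContinuousOn.intervalIntegrable; rwa [uIcc_of_le ht1]
  -- combine RHS into a single integral
  rw [← intervalIntegral.integral_const_mul, ← intervalIntegral.integral_sub
    (hu_int.const_mul (y t₁)) hv_int]
  -- monotone comparison of integrands
  apply intervalIntegral.integral_mono_on ht1 hlhs_int
    ((hu_int.const_mul (y t₁)).sub hv_int)
  intro τ hτ
  have hτ2 : τ ∈ Ico t₁ t₂ := hsubt2 hτ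
  have hPτ : 0 < P τ := hPposI τ hτ
  have hpτ : 0 < p τ := hppos τ hτ2
  have hEτ : 0 < E τ := hEpos τ
  have hyτ : 0 ≤ y τ := hynn τ hτ2
  have h1 : y τ / p τ ≤ y τ / P τ := by
    gcongr
    exact hpP τ hτ2
  have hbd := hgbound τ hτ
  have h2 : y τ / P τ ≤ (y t₁ - B τ) / (E τ * P τ) := by
    rw [div_le_div_iff₀ hPτ (mul_pos hEτ hPτ)]
    nlinarith [hbd, hPτ.le]
  have h3 : (y t₁ - B τ) / (E τ * P τ)
      = y t₁ * ((E τ)⁻¹ / P τ) - 1 / P τ * ((E τ)⁻¹ * B τ) := by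
    field_simp
  linarith [h1, h2, h3.le, h3.ge]
end
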